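/- Define α(k,m) = ω_D(k,m) − ω(k,m) where ω_D = √(k²+m²) and ω = arccos(√(1−m²) cos k). Then for each m ∈ [0,1], α is an even function of k, and α is nondecreasing on [0, π); hence max over k ∈ [−k̄, k̄] of |α| is attained at k ∈ {0, k̄} for any 0 ≤ k̄ < π. -/

import Mathlib

/-!
With `c = √(1 - m²)`, the derivative of `α` on `(0, π)` is the difference of group velocities
`k / √(k² + m²) - c sin k / √(1 - c² cos² k)`. After squaring, its sign reduces to
`c² m² sin² k ≤ (1 - c²) k²`, which follows from `sin² k ≤ k²` and `c² m² ≤ 1 - c²`.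
Evenness is immediate, and an even function monotone on `[0, k̄]` has `|α|` on `[-k̄, k̄]`
bounded by `max |α 0| |α k̄|`.
-/

open Real Set

lemma sq_sqrt_one_sub_sq_mul_sq_le (m : ℝ) : √(1 - m ^ 2) ^ 2 * m ^ 2 ≤ 1 - √(1 - m ^ 2) ^ 2 := by
  rcases le_total (m ^ 2) 1 with hm | hm
  · rw [sq_sqrt (by linarith)]
    nlinarith [sq_nonneg (m ^ 2)]
  · rw [sqrt_eq_zero'.2 (by linarith)]
    norm_num

lemma hasDerivAt_sqrt_sq_add_sq {m k : ℝ} (h : k ^ 2 + m ^ 2 ≠ 0) :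
    HasDerivAt (fun x => √(x ^ 2 + m ^ 2)) (k / √(k ^ 2 + m ^ 2)) k := by
  have := ((hasDerivAt_pow 2 k).add_const (m ^ 2)).sqrt h
  convert this using 1
  field_simp
  ring

lemma hasDerivAt_arccos_mul_cos {c k : ℝ} (h : |c * cos k| < 1) :
    HasDerivAt (fun x => arccos (c * cos x)) (c * sin k / √(1 - (c * cos k) ^ 2)) k := by
  obtain ⟨h₁, h₂⟩ := abs_lt.1 h
  have := (hasDerivAt_arccos h₁.ne' h₂.ne).comp k ((hasDerivAt_cos k).const_mul c)
  exact this.congr_deriv (by ring)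

section

variable {c m k : ℝ}

lemma sq_mul_sin_mul_le (hcm : c ^ 2 * m ^ 2 ≤ 1 - c ^ 2) :
    (c * sin k) ^ 2 * (k ^ 2 + m ^ 2) ≤ k ^ 2 * (1 - (c * cos k) ^ 2) := by
  have hsin : c ^ 2 * m ^ 2 * sin k ^ 2 ≤ (1 - c ^ 2) * k ^ 2 :=
    calc c ^ 2 * m ^ 2 * sin k ^ 2 ≤ c ^ 2 * m ^ 2 * k ^ 2 :=
          mul_le_mul_of_nonneg_left sin_sq_le_sq (by positivity)
      _ ≤ (1 - c ^ 2) * k ^ 2 := by gcongr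
  linear_combination hsin + c ^ 2 * k ^ 2 * sin_sq_add_cos_sq k

lemma mul_sin_div_sqrt_le_div_sqrt (hcm : c ^ 2 * m ^ 2 ≤ 1 - c ^ 2) (hk : 0 ≤ k)
    (hD : 0 < k ^ 2 + m ^ 2) (hL : 0 < 1 - (c * cos k) ^ 2) :
    c * sin k / √(1 - (c * cos k) ^ 2) ≤ k / √(k ^ 2 + m ^ 2) := by
  rw [div_le_div_iff₀ (sqrt_pos.2 hL) (sqrt_pos.2 hD)]
  refine (le_abs_self _).trans (abs_le_of_sq_le_sq ?_ (by positivity))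
  rw [mul_pow (c * sin k), mul_pow k, sq_sqrt hD.le, sq_sqrt hL.le]
  exact sq_mul_sin_mul_le hcm

end

theorem monotoneOn_sqrt_sq_add_sq_sub_arccos_mul_cos {c m : ℝ} (hcm : c ^ 2 * m ^ 2 ≤ 1 - c ^ 2) :
    MonotoneOn (fun k => √(k ^ 2 + m ^ 2) - arccos (c * cos k)) (Icc 0 π) := by
  have hc : c ^ 2 ≤ 1 := by nlinarith [sq_nonneg c, sq_nonneg m]
  refine monotoneOn_of_hasDerivWithinAt_nonneg (f' := fun k =>
      k / √(k ^ 2 + m ^ 2) - c * sin k / √(1 - (c * cos k) ^ 2))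
    (convex_Icc 0 π) (by fun_prop) ?_ ?_ <;> rw [interior_Icc] <;> rintro k ⟨hk₀, hkπ⟩
  all_goals
    have hD : 0 < k ^ 2 + m ^ 2 := by positivity
    have hL : (c * cos k) ^ 2 < 1 := by
      have := sin_pos_of_pos_of_lt_pi hk₀ hkπ
      nlinarith [sin_sq_add_cos_sq k, sq_nonneg (cos k)]
  · exact ((hasDerivAt_sqrt_sq_add_sq hD.ne').sub
      (hasDerivAt_arccos_mul_cos ((sq_lt_one_iff_abs_lt_one _).1 hL))).hasDerivWithinAt
  · exact sub_nonneg.2 (mul_sin_div_sqrt_le_div_sqrt hcm hk₀.le hD (by linarith))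

lemma Function.Even.abs_le_max_abs {f : ℝ → ℝ} (hf : Function.Even f) {kb k : ℝ}
    (hmono : MonotoneOn f (Icc 0 kb)) (hk : k ∈ Icc (-kb) kb) : |f k| ≤ max |f 0| |f kb| := by
  have hk' : |k| ∈ Icc 0 kb := ⟨abs_nonneg k, abs_le.2 hk⟩
  have hkb : kb ∈ Icc 0 kb := ⟨hk'.1.trans hk'.2, le_rfl⟩
  have hfk : f |k| = f k := by rcases abs_choice k with h | h <;> simp only [h, hf k]
  rw [← hfk]
  exact abs_le_max_abs_abs (hmono ⟨le_rfl, hkb.1⟩ hk' hk'.1) (hmono hk' hkb hk'.2)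

theorem alpha_even_monotone_general (m : ℝ) :
    let α : ℝ → ℝ := fun k =>
      Real.sqrt (k ^ 2 + m ^ 2) - Real.arccos (Real.sqrt (1 - m ^ 2) * Real.cos k)
    (∀ k : ℝ, α (-k) = α k) ∧
    MonotoneOn α (Set.Ico 0 Real.pi) ∧
    (∀ kb : ℝ, kb ∈ Set.Ico 0 Real.pi → ∀ k ∈ Set.Icc (-kb) kb,
      |α k| ≤ max |α 0| |α kb|) := by
  intro α
  have heven : Function.Even α := fun k => by simp [α, cos_neg]
  have hmono : MonotoneOn α (Icc 0 π) :=
    monotoneOn_sqrt_sq_add_sq_sub_arccos_mul_cos (sq_sqrt_one_sub_sq_mul_sq_le m)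
  exact ⟨heven, hmono.mono Ico_subset_Icc_self, fun kb hkb k hk =>
    heven.abs_le_max_abs (hmono.mono (Icc_subset_Icc_right hkb.2.le)) hk⟩

theorem alpha_even_monotone (m : ℝ) (hm : m ∈ Set.Icc (0:ℝ) 1) :
    let α : ℝ → ℝ := fun k =>
      Real.sqrt (k ^ 2 + m ^ 2) - Real.arccos (Real.sqrt (1 - m ^ 2) * Real.cos k)
    (∀ k : ℝ, α (-k) = α k) ∧
    MonotoneOn α (Set.Ico 0 Real.pi) ∧
    (∀ kb : ℝ, kb ∈ Set.Ico 0 Real.pi → ∀ k ∈ Set.Icc (-kb) kb,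
      |α k| ≤ max |α 0| |α kb|) :=
  alpha_even_monotone_general m
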